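/- arXiv:1211.4018 — 4 statements merged into one kernel-verified Lean document; each statement's English description precedes it below -/
import Mathlib

section
/- Fix g ≥ 1 and let σ = {⟨v_0⟩,…,⟨v_k⟩} be a k-simplex of the augmented complex B̂_g(ℤ). Then the vectors r(v_0),…,r(v_k) ∈ (ℤ/2)^{2g} are pairwise distinct and the set {r(v_0),…,r(v_k)} is a k-simplex of B̂_g(ℤ/2); moreover, if σ is a standard simplex (respectively a simplex of intersection type, a simplex of additive type), then so is its image. -/
open scoped BigOperators

/-- The free module `R^{2g}`. -/
abbrev SV (g : ℕ) (R : Type) [CommRing R] : Type := Fin (2*g) → R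

/-- The standard symplectic form on `R^{2g}`. -/
def symplForm (g : ℕ) (R : Type) [CommRing R] (v w : SV g R) : R :=
  ∑ i : Fin g,
    (v ⟨i.1, by have := i.isLt; omega⟩ * w ⟨g + i.1, by have := i.isLt; omega⟩ -
      v ⟨g + i.1, by have := i.isLt; omega⟩ * w ⟨i.1, by have := i.isLt; omega⟩)

/-- `(a; b)` is a symplectic basis of `R^{2g}`. -/
def IsSymplBasis (g : ℕ) (R : Type) [CommRing R] (a b : Fin g → SV g R) : Prop :=
  (∃ B : Module.Basis (Fin g ⊕ Fin g) R (SV g R),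
      (∀ i, B (Sum.inl i) = a i) ∧ (∀ i, B (Sum.inr i) = b i)) ∧
  (∀ i j, symplForm g R (a i) (a j) = 0) ∧
  (∀ i j, symplForm g R (b i) (b j) = 0) ∧
  (∀ i j, symplForm g R (a i) (b j) = if i = j then 1 else 0)

/-- `(a_1,…,a_k; b_1,…,b_l)` is a partial symplectic basis of `R^{2g}`:
it extends to a symplectic basis. -/
def IsPartialSymplBasis (g : ℕ) (R : Type) [CommRing R] {k l : ℕ}
    (a : Fin k → SV g R) (b : Fin l → SV g R) : Prop :=
  ∃ (hk : k ≤ g) (hl : l ≤ g) (A B : Fin g → SV g R), IsSymplBasis g R A B ∧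
    (∀ i, A (Fin.castLE hk i) = a i) ∧ (∀ j, B (Fin.castLE hl j) = b j)

/-- The lax vector `⟨v⟩ = {v, -v}`. -/
def lax {α : Type} [Neg α] (v : α) : Set α := {v, -v}

/-- Standard simplices of the complex of lax isotropic bases `B_g(R)`.  (The set of
vertices of a simplex.) -/
def IsStdSimplex (g : ℕ) (R : Type) [CommRing R] (σ : Set (Set (SV g R))) : Prop :=
  ∃ (k : ℕ) (a : Fin k → SV g R),
    IsPartialSymplBasis g R a (fun i : Fin 0 => i.elim0) ∧
    σ = Set.range fun i => lax (a i)

/-- Simplices of intersection type of the augmented complex `B̂_g(R)`. -/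
def IsIntSimplex (g : ℕ) (R : Type) [CommRing R] (σ : Set (Set (SV g R))) : Prop :=
  ∃ (k : ℕ) (a : Fin k → SV g R) (b : SV g R), 1 ≤ k ∧
    IsPartialSymplBasis g R a (fun _ : Fin 1 => b) ∧
    σ = insert (lax b) (Set.range fun i => lax (a i))

/-- Simplices of additive type of the augmented complex `B̂_g(R)`. -/
def IsAddSimplex (g : ℕ) (R : Type) [CommRing R] (σ : Set (Set (SV g R))) : Prop :=
  ∃ (k m : ℕ) (a : Fin k → SV g R) (ε : Fin k → R), (m = 2 ∨ m = 3) ∧ m ≤ k ∧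
    (∀ i, ε i = 1 ∨ ε i = -1) ∧
    IsPartialSymplBasis g R a (fun i : Fin 0 => i.elim0) ∧
    σ = insert (lax (∑ i : Fin k, if (i : ℕ) < m then ε i • a i else 0))
        (Set.range fun i => lax (a i))

/-- Simplices of the augmented complex of lax isotropic bases `B̂_g(R)`. -/
def IsHatSimplex (g : ℕ) (R : Type) [CommRing R] (σ : Set (Set (SV g R))) : Prop :=
  IsStdSimplex g R σ ∨ IsIntSimplex g R σ ∨ IsAddSimplex g R σ

/-- Coordinatewise reduction `ℤ^{2g} → (ℤ/2)^{2g}`. -/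
def rMap (g : ℕ) (v : SV g ℤ) : SV g (ZMod 2) := fun i => ((v i : ℤ) : ZMod 2)

/-- The reduction map on simplices, sending each lax vector `⟨v⟩` (as a set) to its image. -/
def rSimp (g : ℕ) (σ : Set (Set (SV g ℤ))) : Set (Set (SV g (ZMod 2))) :=
  (fun s => rMap g '' s) '' σ

/-- The group of `R`-linear automorphisms of `R^{2g}`. -/
abbrev SAut (g : ℕ) (R : Type) [CommRing R] : Type := (SV g R) ≃ₗ[R] (SV g R)

/-- The symplectic group `Sp_{2g}(R)`, as the subgroup of linear automorphisms of
`R^{2g}` preserving the standard symplectic form. -/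
def Sp (g : ℕ) (R : Type) [CommRing R] : Subgroup (SAut g R) where
  carrier := {M | ∀ v w, symplForm g R (M v) (M w) = symplForm g R v w}
  one_mem' := by intro v w; rfl
  mul_mem' := by
    intro M N hM hN v w
    exact (hM (N v) (N w)).trans (hN v w)
  inv_mem' := by
    intro M hM v w
    have h := hM (M.symm v) (M.symm w)
    simpa using h.symm

/-- The level 2 congruence subgroup `Sp_{2g}(ℤ)[2]`, the kernel of the reduction
`Sp_{2g}(ℤ) → Sp_{2g}(ℤ/2)`: symplectic automorphisms acting trivially mod 2. -/
def SpLevel2 (g : ℕ) : Subgroup (SAut g ℤ) where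
  carrier := {M | M ∈ Sp g ℤ ∧ ∀ v, rMap g (M v) = rMap g v}
  one_mem' := ⟨(Sp g ℤ).one_mem, fun _ => rfl⟩
  mul_mem' := by
    rintro M N ⟨hM, hM2⟩ ⟨hN, hN2⟩
    exact ⟨(Sp g ℤ).mul_mem hM hN, fun v => ((hM2 (N v)).trans (hN2 v) : _)⟩
  inv_mem' := by
    rintro M ⟨hM, hM2⟩
    refine ⟨(Sp g ℤ).inv_mem hM, fun v => ?_⟩
    have := hM2 (M.symm v)
    simp only [LinearEquiv.apply_symm_apply] at this
    exact this.symm ▸ rfl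

/-!
Reduction mod 2 is a ring homomorphism, and a ring homomorphism `R → S` with `R` nontrivial
carries a partial symplectic basis of `R^{2g}` to one of `S^{2g}`: the form is a polynomial in
the coordinates, and a basis stays a basis because its determinant with respect to the standard
basis stays a unit. So the vertices of a simplex reduce to distinct members of a basis of
`(ℤ/2)^{2g}`. In an additive simplex the signs disappear mod 2, and the extra vertex becomes a sum
of two or three of these basis vectors, which by linear independence is none of them.
-/

section RingHom

variable {R S : Type} [CommRing R] [CommRing S] (f : R →+* S)

lemma symplForm_map (g : ℕ) (v w : SV g R) :
    symplForm g S (f ∘ v) (f ∘ w) = f (symplForm g R v w) := by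
  simp [symplForm]

lemma Module.Basis.exists_map_comp [Nontrivial R] {n : ℕ} {ι : Type} [Fintype ι]
    [DecidableEq ι] (B : Module.Basis ι R (Fin n → R)) :
    ∃ B' : Module.Basis ι S (Fin n → S), ∀ i, B' i = f ∘ B i := by
  let σ := (B.indexEquiv (Pi.basisFun R (Fin n))).symm
  let e := (Pi.basisFun R (Fin n)).reindex σ
  let e' := (Pi.basisFun S (Fin n)).reindex σ
  have hdet : e'.det (fun i => f ∘ B i) = f (e.det B) := by
    rw [Module.Basis.det_apply, Module.Basis.det_apply, RingHom.map_det]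
    -- both matrices list coordinates, so one is the entrywise image of the other
    rfl
  have hunit : IsUnit (e'.det fun i => f ∘ B i) := hdet ▸ (e.isUnit_det B).map f
  obtain ⟨hli, hspan⟩ := (is_basis_iff_det e').mpr hunit
  exact ⟨.mk hli hspan.ge, fun i => Module.Basis.mk_apply hli hspan.ge i⟩

lemma IsPartialSymplBasis.map [Nontrivial R] {g k l : ℕ} {a : Fin k → SV g R}
    {b : Fin l → SV g R} (h : IsPartialSymplBasis g R a b) :
    IsPartialSymplBasis g S (fun i => f ∘ a i) (fun j => f ∘ b j) := by
  obtain ⟨hk, hl, A, B, ⟨⟨B₀, hB₀A, hB₀B⟩, hAA, hBB, hAB⟩, hA, hB⟩ := h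
  obtain ⟨B', hB'⟩ := B₀.exists_map_comp f
  refine ⟨hk, hl, fun i => f ∘ A i, fun i => f ∘ B i,
    ⟨⟨B', fun i => by rw [hB', hB₀A], fun i => by rw [hB', hB₀B]⟩, ?_, ?_, ?_⟩,
    fun i => congrArg (f ∘ ·) (hA i), fun j => congrArg (f ∘ ·) (hB j)⟩
  · intro i j; rw [symplForm_map, hAA, map_zero]
  · intro i j; rw [symplForm_map, hBB, map_zero]
  · intro i j; rw [symplForm_map, hAB, apply_ite f, map_one, map_zero]

end RingHom

lemma IsPartialSymplBasis.linearIndependent {R : Type} [CommRing R] {g k l : ℕ}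
    {a : Fin k → SV g R} {b : Fin l → SV g R} (h : IsPartialSymplBasis g R a b) :
    LinearIndependent R (Sum.elim a b) := by
  obtain ⟨hk, hl, A, B, ⟨⟨B₀, hB₀A, hB₀B⟩, -⟩, hA, hB⟩ := h
  have : Sum.elim a b = B₀ ∘ Sum.map (Fin.castLE hk) (Fin.castLE hl) := by
    ext (i | j) : 1 <;> simp [hB₀A, hB₀B, hA, hB]
  rw [this]
  exact B₀.linearIndependent.comp _
    (Sum.map_injective.mpr ⟨Fin.castLE_injective hk, Fin.castLE_injective hl⟩)

lemma LinearIndependent.sum_ite_lt_ne {R M : Type} [Ring R] [Nontrivial R] [AddCommGroup M]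
    [Module R M] {k m : ℕ} {a : Fin k → M} (ha : LinearIndependent R a) (hm : 2 ≤ m)
    (hmk : m ≤ k) (j : Fin k) :
    (∑ i : Fin k, if (i : ℕ) < m then a i else 0) ≠ a j := by
  intro h
  let c : Fin k → R := fun i => (if (i : ℕ) < m then 1 else 0) - if i = j then 1 else 0
  have hc : ∑ i, c i • a i = 0 := by
    simp [c, sub_smul, Finset.sum_sub_distrib, ite_smul, h]
  have hc0 := Fintype.linearIndependent_iff.mp ha c hc
  obtain ⟨t, htm, htj⟩ : ∃ t : Fin k, (t : ℕ) < m ∧ t ≠ j := by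
    by_cases hj : (j : ℕ) = 0
    · exact ⟨⟨1, by omega⟩, (by omega : 1 < m), Fin.ne_of_val_ne (by omega : 1 ≠ (j : ℕ))⟩
    · exact ⟨⟨0, by omega⟩, (by omega : 0 < m), Fin.ne_of_val_ne (by omega : 0 ≠ (j : ℕ))⟩
  simpa [c, htm, htj] using hc0 t

lemma range_lax_cons {α : Type} [Neg α] {n : ℕ} (x : α) (a : Fin n → α) :
    (Set.range fun i => lax ((Fin.cons x a : Fin (n + 1) → α) i)) =
      insert (lax x) (Set.range fun i => lax (a i)) :=
  (congrArg Set.range (Fin.comp_cons lax x a)).trans (Fin.range_cons _ _)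

section Lax

variable {α β : Type} [InvolutiveNeg α] {φ : α → β}

lemma eq_of_lax_eq (hφ : ∀ x, φ (-x) = φ x) {x y : α} (h : lax x = lax y) : φ x = φ y := by
  have hx : x ∈ lax y := h ▸ Set.mem_insert x _
  rcases hx with rfl | rfl
  exacts [rfl, hφ y]

lemma range_lax_comp_subset [Neg β] (hφ : ∀ x, φ (-x) = φ x) {ι κ : Type} {v : ι → α}
    {u : κ → α} (h : (Set.range fun i => lax (v i)) ⊆ Set.range fun t => lax (u t)) :
    (Set.range fun i => lax (φ (v i))) ⊆ Set.range fun t => lax (φ (u t)) := by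
  rintro _ ⟨i, rfl⟩
  obtain ⟨t, ht⟩ := h ⟨i, rfl⟩
  exact ⟨t, congrArg lax (eq_of_lax_eq hφ ht)⟩

lemma range_lax_comp_eq [Neg β] (hφ : ∀ x, φ (-x) = φ x) {ι κ : Type} {v : ι → α}
    {u : κ → α} (h : (Set.range fun i => lax (v i)) = Set.range fun t => lax (u t)) :
    (Set.range fun i => lax (φ (v i))) = Set.range fun t => lax (φ (u t)) :=
  (range_lax_comp_subset hφ h.le).antisymm (range_lax_comp_subset hφ h.ge)

lemma injective_comp_of_range_lax_eq (hφ : ∀ x, φ (-x) = φ x) {ι κ : Type} {v : ι → α}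
    {u : κ → α} (hv : Function.Injective fun i => lax (v i))
    (hu : Function.Injective fun t => φ (u t))
    (h : (Set.range fun i => lax (v i)) = Set.range fun t => lax (u t)) :
    Function.Injective fun i => φ (v i) := by
  intro i j hij
  obtain ⟨s, hs⟩ : lax (v i) ∈ Set.range fun t => lax (u t) := h ▸ ⟨i, rfl⟩
  obtain ⟨t, ht⟩ : lax (v j) ∈ Set.range fun t => lax (u t) := h ▸ ⟨j, rfl⟩
  have hst : s = t := hu (by simpa only [eq_of_lax_eq hφ hs, eq_of_lax_eq hφ ht] using hij)
  exact hv (show lax (v i) = lax (v j) by rw [← hs, ← ht, hst])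

end Lax

section Reduction

variable {g : ℕ}

lemma rMap_neg (v : SV g ℤ) : rMap g (-v) = rMap g v := by
  funext i
  simp [rMap, ZMod.neg_eq_self_mod_two]

lemma rMap_sum_signed {k m : ℕ} (a : Fin k → SV g ℤ) {ε : Fin k → ℤ}
    (hε : ∀ i, ε i = 1 ∨ ε i = -1) :
    rMap g (∑ i : Fin k, if (i : ℕ) < m then ε i • a i else 0) =
      ∑ i : Fin k, if (i : ℕ) < m then rMap g (a i) else 0 := by
  funext x
  simp only [rMap, Finset.sum_apply, Int.cast_sum]
  refine Finset.sum_congr rfl fun i _ => ?_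
  split_ifs
  · rcases hε i with h | h <;> simp [h, rMap, ZMod.neg_eq_self_mod_two]
  · simp

lemma IsPartialSymplBasis.rMap {k l : ℕ} {a : Fin k → SV g ℤ} {b : Fin l → SV g ℤ}
    (h : IsPartialSymplBasis g ℤ a b) :
    IsPartialSymplBasis g (ZMod 2) (fun i => rMap g (a i)) (fun j => rMap g (b j)) :=
  h.map (Int.castRingHom (ZMod 2))

lemma reduction_of_range_lax_eq_insert {n k : ℕ} {v : Fin n → SV g ℤ}
    (hv : Function.Injective fun i => lax (v i)) (x : SV g ℤ) (a : Fin k → SV g ℤ)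
    (ha : Function.Injective fun i => rMap g (a i)) (hx : ∀ i, rMap g (a i) ≠ rMap g x)
    (h : (Set.range fun i => lax (v i)) = insert (lax x) (Set.range fun i => lax (a i))) :
    Function.Injective (fun i => rMap g (v i)) ∧
      (Set.range fun i => lax (rMap g (v i))) =
        insert (lax (rMap g x)) (Set.range fun i => lax (rMap g (a i))) := by
  have hcons : (fun i => rMap g ((Fin.cons x a : Fin (k + 1) → SV g ℤ) i)) =
      Fin.cons (rMap g x) fun i => rMap g (a i) :=
    Fin.comp_cons (rMap g) x a
  have hu : Function.Injective fun i => rMap g ((Fin.cons x a : Fin (k + 1) → SV g ℤ) i) := by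
    rw [hcons, Fin.cons_injective_iff]
    exact ⟨fun ⟨i, hi⟩ => hx i hi, ha⟩
  rw [← range_lax_cons] at h
  refine ⟨injective_comp_of_range_lax_eq rMap_neg hv hu h, ?_⟩
  rw [range_lax_comp_eq rMap_neg h, ← range_lax_cons, ← hcons]

lemma IsStdSimplex.reduction {n : ℕ} {v : Fin n → SV g ℤ}
    (hv : Function.Injective fun i => lax (v i))
    (h : IsStdSimplex g ℤ (Set.range fun i => lax (v i))) :
    Function.Injective (fun i => rMap g (v i)) ∧
      IsStdSimplex g (ZMod 2) (Set.range fun i => lax (rMap g (v i))) := by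
  obtain ⟨k, a, ha, hσ⟩ := h
  have hred := ha.rMap
  refine ⟨injective_comp_of_range_lax_eq rMap_neg hv
    (hred.linearIndependent.injective.comp Sum.inl_injective) hσ,
    k, _, ?_, range_lax_comp_eq rMap_neg hσ⟩
  convert hred

lemma IsIntSimplex.reduction {n : ℕ} {v : Fin n → SV g ℤ}
    (hv : Function.Injective fun i => lax (v i))
    (h : IsIntSimplex g ℤ (Set.range fun i => lax (v i))) :
    Function.Injective (fun i => rMap g (v i)) ∧
      IsIntSimplex g (ZMod 2) (Set.range fun i => lax (rMap g (v i))) := by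
  obtain ⟨k, a, b, hk, hab, hσ⟩ := h
  have hred := hab.rMap
  have hinj := hred.linearIndependent.injective
  obtain ⟨hinjv, hσ'⟩ := reduction_of_range_lax_eq_insert hv b a
    (hinj.comp Sum.inl_injective) (fun i hi => Sum.inl_ne_inr (hinj (a₂ := .inr 0) hi)) hσ
  exact ⟨hinjv, k, _, _, hk, hred, hσ'⟩

lemma IsAddSimplex.reduction {n : ℕ} {v : Fin n → SV g ℤ}
    (hv : Function.Injective fun i => lax (v i))
    (h : IsAddSimplex g ℤ (Set.range fun i => lax (v i))) :
    Function.Injective (fun i => rMap g (v i)) ∧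
      IsAddSimplex g (ZMod 2) (Set.range fun i => lax (rMap g (v i))) := by
  obtain ⟨k, m, a, ε, hm, hmk, hε, ha, hσ⟩ := h
  have hred := ha.rMap
  have hli : LinearIndependent (ZMod 2) fun i => rMap g (a i) :=
    hred.linearIndependent.comp Sum.inl Sum.inl_injective
  obtain ⟨hinjv, hσ'⟩ := reduction_of_range_lax_eq_insert hv _ a hli.injective
    (fun i hi => hli.sum_ite_lt_ne (by omega) hmk i (by rw [← rMap_sum_signed a hε, hi])) hσ
  refine ⟨hinjv, k, m, fun i => rMap g (a i), fun _ => 1, hm, hmk, fun _ => Or.inl rfl, ?_, ?_⟩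
  · convert hred
  · simpa only [one_smul, rMap_sum_signed a hε] using hσ'

end Reduction

theorem reduction_of_simplex_general (g : ℕ) (k : ℕ) (v : Fin (k+1) → SV g ℤ)
    (hinj : Function.Injective fun i => lax (v i))
    (hσ : IsHatSimplex g ℤ (Set.range fun i => lax (v i))) :
    Function.Injective (fun i => rMap g (v i)) ∧
    IsHatSimplex g (ZMod 2) (Set.range fun i => lax (rMap g (v i))) ∧
    (IsStdSimplex g ℤ (Set.range fun i => lax (v i)) →
      IsStdSimplex g (ZMod 2) (Set.range fun i => lax (rMap g (v i)))) ∧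
    (IsIntSimplex g ℤ (Set.range fun i => lax (v i)) →
      IsIntSimplex g (ZMod 2) (Set.range fun i => lax (rMap g (v i)))) ∧
    (IsAddSimplex g ℤ (Set.range fun i => lax (v i)) →
      IsAddSimplex g (ZMod 2) (Set.range fun i => lax (rMap g (v i)))) := by
  refine ⟨?_, ?_, fun h => (h.reduction hinj).2, fun h => (h.reduction hinj).2,
    fun h => (h.reduction hinj).2⟩
  · rcases hσ with h | h | h
    exacts [(h.reduction hinj).1, (h.reduction hinj).1, (h.reduction hinj).1]
  · rcases hσ with h | h | h
    exacts [.inl (h.reduction hinj).2, .inr (.inl (h.reduction hinj).2),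
      .inr (.inr (h.reduction hinj).2)]

/-- The reduction of a `k`-simplex of the augmented complex
`B̂_g(ℤ)` is a `k`-simplex of `B̂_g(ℤ/2)` of the same type. -/
theorem reduction_of_simplex (g : ℕ) (hg : 1 ≤ g) (k : ℕ) (v : Fin (k+1) → SV g ℤ)
    (hinj : Function.Injective fun i => lax (v i))
    (hσ : IsHatSimplex g ℤ (Set.range fun i => lax (v i))) :
    Function.Injective (fun i => rMap g (v i)) ∧
    IsHatSimplex g (ZMod 2) (Set.range fun i => lax (rMap g (v i))) ∧
    (IsStdSimplex g ℤ (Set.range fun i => lax (v i)) →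
      IsStdSimplex g (ZMod 2) (Set.range fun i => lax (rMap g (v i)))) ∧
    (IsIntSimplex g ℤ (Set.range fun i => lax (v i)) →
      IsIntSimplex g (ZMod 2) (Set.range fun i => lax (rMap g (v i)))) ∧
    (IsAddSimplex g ℤ (Set.range fun i => lax (v i)) →
      IsAddSimplex g (ZMod 2) (Set.range fun i => lax (rMap g (v i)))) :=
  reduction_of_simplex_general g k v hinj hσ
end

section
/- Every subset S of (ℤ/2)^n ∖ {0} with |S| ≤ 4 has one of the following forms: ∅, {v_1}, {v_1, v_2}, {v_1, v_2, v_3}, {v_1, v_2, v_1+v_2}, {v_1, v_2, v_3, v_4}, {v_1, v_2, v_3, v_1+v_2}, or {v_1, v_2, v_3, v_1+v_2+v_3}, where in each case v_1, v_2, … are linearly independent vectors in (ℤ/2)^n. -/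
/-!
Over `ZMod 2` the span of `v₁, …, vₖ` consists of the subset sums of the `vᵢ`, so adjoining a
vector to an independent family keeps it independent unless the vector is such a sum. Three
distinct nonzero vectors are thus independent unless one is the sum of the other two; a fourth
vector is either outside the span of the other three, or the sum of two or three of them.
-/

open Submodule

section

variable {R M : Type*} [Semiring R] [AddCommMonoid M] [Module R M] {x y z : M}

theorem LinearIndependent.triple_rotate (h : LinearIndependent R ![x, y, z]) :
    LinearIndependent R ![y, z, x] := by
  convert h.comp _ (finRotate 3).injective using 1
  ext i; fin_cases i <;> rfl

theorem LinearIndependent.triple_swap (h : LinearIndependent R ![x, y, z]) :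
    LinearIndependent R ![x, z, y] := by
  convert h.comp _ (Equiv.swap (1 : Fin 3) 2).injective using 1
  ext i; fin_cases i <;> rfl

end

section

variable {M : Type*} [AddCommGroup M] [Module (ZMod 2) M] {x y z : M}

theorem mem_span_singleton_zmod_two : x ∈ span (ZMod 2) {y} ↔ x = 0 ∨ x = y := by
  rw [mem_span_singleton]
  constructor
  · rintro ⟨a, rfl⟩
    obtain rfl | rfl : a = 0 ∨ a = 1 := by revert a; decide
    all_goals simp
  · rintro (rfl | rfl)
    · exact ⟨0, zero_smul _ _⟩
    · exact ⟨1, one_smul _ _⟩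

theorem mem_span_insert_zmod_two {s : Set M} :
    x ∈ span (ZMod 2) (insert y s) ↔ x ∈ span (ZMod 2) s ∨ x - y ∈ span (ZMod 2) s := by
  rw [mem_span_insert]
  constructor
  · rintro ⟨a, w, hw, rfl⟩
    obtain rfl | rfl : a = 0 ∨ a = 1 := by revert a; decide
    · simpa using Or.inl hw
    · simpa using Or.inr hw
  · rintro (h | h)
    · exact ⟨0, x, h, by simp⟩
    · exact ⟨1, x - y, h, by simp⟩

theorem mem_span_pair_zmod_two :
    x ∈ span (ZMod 2) {y, z} ↔ x = 0 ∨ x = z ∨ x = y ∨ x = y + z := by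
  rw [mem_span_insert_zmod_two, mem_span_singleton_zmod_two, mem_span_singleton_zmod_two,
    sub_eq_zero, sub_eq_iff_eq_add', or_assoc]

theorem linearIndependent_pair_zmod_two_iff :
    LinearIndependent (ZMod 2) ![x, y] ↔ x ≠ 0 ∧ y ≠ 0 ∧ x ≠ y := by
  rw [Matrix.vecCons, linearIndependent_finCons, linearIndependent_unique_iff,
    Matrix.range_cons_empty, mem_span_singleton_zmod_two]
  simp only [Matrix.cons_val_fin_one]
  tauto

variable [DecidableEq M] {S : Finset M}

theorem Finset.card_eq_three_zmod_two (hS : ∀ v ∈ S, v ≠ 0) (h : S.card = 3) :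
    (∃ v₁ v₂ v₃, LinearIndependent (ZMod 2) ![v₁, v₂, v₃] ∧ S = {v₁, v₂, v₃}) ∨
    (∃ v₁ v₂, LinearIndependent (ZMod 2) ![v₁, v₂] ∧ S = {v₁, v₂, v₁ + v₂}) := by
  obtain ⟨a, b, c, hab, hac, hbc, rfl⟩ := Finset.card_eq_three.mp h
  have hli : LinearIndependent (ZMod 2) ![b, c] :=
    linearIndependent_pair_zmod_two_iff.2 ⟨hS b (by simp), hS c (by simp), hbc⟩
  by_cases ha : a ∈ span (ZMod 2) {b, c}
  · rw [mem_span_pair_zmod_two] at ha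
    obtain ha | ha | ha | rfl := ha
    · exact absurd ha (hS a (by simp))
    · exact absurd ha hac
    · exact absurd ha hab
    · exact Or.inr ⟨b, c, hli, by ext; simp; tauto⟩
  · refine Or.inl ⟨a, b, c, hli.finCons ?_, rfl⟩
    rwa [Matrix.range_cons_cons_empty]

theorem Finset.card_eq_four_zmod_two (hS : ∀ v ∈ S, v ≠ 0) (h : S.card = 4) :
    (∃ v₁ v₂ v₃ v₄, LinearIndependent (ZMod 2) ![v₁, v₂, v₃, v₄] ∧ S = {v₁, v₂, v₃, v₄}) ∨
    (∃ v₁ v₂ v₃, LinearIndependent (ZMod 2) ![v₁, v₂, v₃] ∧ S = {v₁, v₂, v₃, v₁ + v₂}) ∨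
    (∃ v₁ v₂ v₃, LinearIndependent (ZMod 2) ![v₁, v₂, v₃] ∧
      S = {v₁, v₂, v₃, v₁ + v₂ + v₃}) := by
  obtain ⟨a, T, haT, rfl, hT⟩ := Finset.card_eq_succ.mp h
  have ha : a ≠ 0 := hS a (by simp)
  obtain ⟨x, y, z, hxyz, rfl⟩ | ⟨x, y, hxy, rfl⟩ :=
    Finset.card_eq_three_zmod_two (fun v hv ↦ hS v (by simp [hv])) hT
  · by_cases hspan : a ∈ span (ZMod 2) {x, y, z}
    · rw [mem_span_insert_zmod_two, mem_span_pair_zmod_two, mem_span_pair_zmod_two,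
        sub_eq_zero, sub_eq_iff_eq_add', sub_eq_iff_eq_add', sub_eq_iff_eq_add'] at hspan
      simp only [Finset.mem_insert, Finset.mem_singleton, not_or] at haT
      obtain (rfl | rfl | rfl | rfl) | (rfl | rfl | rfl | rfl) := hspan
      · exact absurd rfl ha
      · exact absurd rfl haT.2.2
      · exact absurd rfl haT.2.1
      · exact Or.inr (Or.inl ⟨y, z, x, hxyz.triple_rotate, by ext; simp; tauto⟩)
      · exact absurd rfl haT.1
      · exact Or.inr (Or.inl ⟨x, z, y, hxyz.triple_swap, by ext; simp; tauto⟩)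
      · exact Or.inr (Or.inl ⟨x, y, z, hxyz, by ext; simp; tauto⟩)
      · exact Or.inr (Or.inr ⟨x, y, z, hxyz, by ext; simp [add_assoc]; tauto⟩)
    · refine Or.inl ⟨a, x, y, z, hxyz.finCons ?_, rfl⟩
      rwa [Matrix.range_cons, Matrix.range_cons_cons_empty, Set.singleton_union]
  · have hspan : a ∉ span (ZMod 2) {x, y} := by
      rw [mem_span_pair_zmod_two]
      simp only [Finset.mem_insert, Finset.mem_singleton, not_or] at haT
      tauto
    refine Or.inr (Or.inl ⟨x, y, a, (hxy.finCons ?_).triple_rotate, by ext; simp; tauto⟩)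
    rwa [Matrix.range_cons_cons_empty]

end

/-- Every set of at most 4 nonzero vectors in `(ℤ/2)^n` has one of
eight possible forms, expressed in terms of linearly independent vectors. -/
theorem small_subsets_of_nonzero_vectors (n : ℕ) (S : Finset (Fin n → ZMod 2))
    (hS : ∀ v ∈ S, v ≠ 0) (hcard : S.card ≤ 4) :
    S = ∅ ∨
    (∃ v₁, LinearIndependent (ZMod 2) ![v₁] ∧ S = {v₁}) ∨
    (∃ v₁ v₂, LinearIndependent (ZMod 2) ![v₁, v₂] ∧ S = {v₁, v₂}) ∨
    (∃ v₁ v₂ v₃, LinearIndependent (ZMod 2) ![v₁, v₂, v₃] ∧ S = {v₁, v₂, v₃}) ∨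
    (∃ v₁ v₂, LinearIndependent (ZMod 2) ![v₁, v₂] ∧ S = {v₁, v₂, v₁ + v₂}) ∨
    (∃ v₁ v₂ v₃ v₄, LinearIndependent (ZMod 2) ![v₁, v₂, v₃, v₄] ∧ S = {v₁, v₂, v₃, v₄}) ∨
    (∃ v₁ v₂ v₃, LinearIndependent (ZMod 2) ![v₁, v₂, v₃] ∧ S = {v₁, v₂, v₃, v₁ + v₂}) ∨
    (∃ v₁ v₂ v₃, LinearIndependent (ZMod 2) ![v₁, v₂, v₃] ∧
      S = {v₁, v₂, v₃, v₁ + v₂ + v₃}) := by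
  interval_cases h : S.card
  · exact Or.inl (Finset.card_eq_zero.mp h)
  · obtain ⟨a, rfl⟩ := Finset.card_eq_one.mp h
    refine Or.inr (Or.inl ⟨a, ?_, rfl⟩)
    exact linearIndependent_unique_iff.2 (hS a (by simp))
  · obtain ⟨a, b, hab, rfl⟩ := Finset.card_eq_two.mp h
    refine Or.inr (Or.inr (Or.inl ⟨a, b, ?_, rfl⟩))
    exact linearIndependent_pair_zmod_two_iff.2 ⟨hS a (by simp), hS b (by simp), hab⟩
  · rcases Finset.card_eq_three_zmod_two hS h with h3 | h3
    · exact Or.inr (Or.inr (Or.inr (Or.inl h3)))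
    · exact Or.inr (Or.inr (Or.inr (Or.inr (Or.inl h3))))
  · rcases Finset.card_eq_four_zmod_two hS h with h4 | h4 | h4
    · exact Or.inr (Or.inr (Or.inr (Or.inr (Or.inr (Or.inl h4)))))
    · exact Or.inr (Or.inr (Or.inr (Or.inr (Or.inr (Or.inr (Or.inl h4))))))
    · exact Or.inr (Or.inr (Or.inr (Or.inr (Or.inr (Or.inr (Or.inr h4))))))
end

section
/- Let g ≥ 1 and let G = {Y ∈ Sp_{2g}(ℤ)[2] : Y e_1 = ±e_1 and Y e_{g+1} = ±e_{g+1}} be the subgroup of Sp_{2g}(ℤ)[2] stabilizing the lax vectors ⟨e_1⟩ and ⟨e_{g+1}⟩. Then every Y ∈ G satisfies Y e_1 = ε e_1 and Y e_{g+1} = ε e_{g+1} for a single sign ε ∈ {±1} and preserves the submodule W spanned by {e_i, e_{g+i} : 2 ≤ i ≤ g}, and the map Y ↦ (ε, Y|_W) is a group isomorphism from G onto (ℤ/2) × Sp_{2g−2}(ℤ)[2]. -/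
open scoped BigOperators

/-- The `j`-th standard basis vector of `ℤ^{2g}` (for an index given as a natural number). -/
def stdE (g : ℕ) (j : ℕ) : SV g ℤ := fun i => if (i : ℕ) = j then 1 else 0

/-- The embedding `ℤ^{2(g-1)} → ℤ^{2g}` onto the span `W` of
`e_2, …, e_g, e_{g+2}, …, e_{2g}` (the orthogonal complement of `⟨e_1, e_{g+1}⟩`). -/
def embMap (g : ℕ) (v : SV (g-1) ℤ) : SV g ℤ := fun j =>
  if h0 : (j : ℕ) = 0 ∨ (j : ℕ) = g then 0
  else if h : (j : ℕ) < g then v ⟨(j : ℕ) - 1, by push_neg at h0; omega⟩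
  else v ⟨(g - 1) + ((j : ℕ) - g - 1), by push_neg at h0; have := j.isLt; omega⟩

/-- The subgroup of `Sp_{2g}(ℤ)[2]` stabilizing the lax vectors `⟨e_1⟩` and `⟨e_{g+1}⟩`. -/
def StabG (g : ℕ) : Subgroup (SAut g ℤ) where
  carrier := {Y | Y ∈ SpLevel2 g ∧ (Y (stdE g 0) = stdE g 0 ∨ Y (stdE g 0) = -stdE g 0) ∧
    (Y (stdE g g) = stdE g g ∨ Y (stdE g g) = -stdE g g)}
  one_mem' := ⟨(SpLevel2 g).one_mem, Or.inl rfl, Or.inl rfl⟩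
  mul_mem' := by
    have key : ∀ (M N : SAut g ℤ) (x : SV g ℤ), (M x = x ∨ M x = -x) →
        (N x = x ∨ N x = -x) → ((M * N) x = x ∨ (M * N) x = -x) := by
      intro M N x hM hN
      have hmul : (M * N) x = M (N x) := rfl
      rcases hN with h | h <;> rcases hM with h' | h' <;> simp [hmul, h, map_neg, h']
    rintro M N ⟨hM, hM1, hMg⟩ ⟨hN, hN1, hNg⟩
    exact ⟨(SpLevel2 g).mul_mem hM hN, key M N _ hM1 hN1, key M N _ hMg hNg⟩
  inv_mem' := by
    have key : ∀ (M : SAut g ℤ) (x : SV g ℤ), (M x = x ∨ M x = -x) →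
        (M⁻¹ x = x ∨ M⁻¹ x = -x) := by
      intro M x h
      rcases h with h | h
      · left
        show M.symm x = x
        conv_lhs => rw [← h]
        exact M.symm_apply_apply x
      · right
        show M.symm x = -x
        have h2 : M.symm (M x) = M.symm (-x) := congrArg _ h
        rw [M.symm_apply_apply, map_neg] at h2
        exact neg_eq_iff_eq_neg.mp h2.symm
    rintro M ⟨hM, hM1, hMg⟩
    exact ⟨(SpLevel2 g).inv_mem hM, key M _ hM1, key M _ hMg⟩

/-!
In coordinates adapted to `ℤ^{2g} = ⟨e_1, e_{g+1}⟩ ⊕ W`, pairing `Y v` with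
`Y e_{g+1} = ±e_{g+1}` shows that `Y` multiplies the `e_1`-coordinate of every vector by that
sign, and pairing with `Y e_1 = ±e_1` does the same for the `e_{g+1}`-coordinate. Applied to
`v = e_1`, this forces the two signs to agree, because `ω(e_1, e_{g+1}) = 1`. So `Y` is block
diagonal: a sign `ε` on the hyperbolic plane and an automorphism `Z` of `W`, which is
symplectic and trivial mod 2 exactly when `Y` is. Hence `(ε, Z) ↦ ε ⊕ Z` is an isomorphism
`ℤˣ × Sp_{2g-2}(ℤ)[2] ≅ G`.
-/

theorem LinearEquiv.exists_eq_prodCongr_of_fst {R M N : Type*} [Semiring R] [AddCommMonoid M]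
    [AddCommMonoid N] [Module R M] [Module R N] (T : (M × N) ≃ₗ[R] M × N) (e : M ≃ₗ[R] M)
    (hfst : ∀ x, (T x).1 = e x.1) (hsnd : ∀ a, (T (a, 0)).2 = 0) :
    ∃ Z : N ≃ₗ[R] N, T = e.prodCongr Z := by
  let Z : N →ₗ[R] N := LinearMap.snd R M N ∘ₗ T.toLinearMap ∘ₗ LinearMap.inr R M N
  have hT : ∀ x, T x = (e x.1, Z x.2) := fun x => by
    refine Prod.ext (hfst x) ?_
    have hx : T x = T (x.1, 0) + T (0, x.2) := by rw [← map_add]; simp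
    simp [hx, hsnd, Z]
  have hZ : Function.Bijective Z := by
    refine ⟨fun w w' h => ?_, fun u => ⟨(T.symm (0, u)).2, ?_⟩⟩
    · have : T (0, w) = T (0, w') := by rw [hT, hT]; simp [h]
      simpa using T.injective this
    · simpa using (congrArg Prod.snd (hT (T.symm (0, u)))).symm
  exact ⟨LinearEquiv.ofBijective Z hZ, LinearEquiv.ext hT⟩

lemma exists_units_smul_eq_of_eq_or_eq_neg {R M : Type*} [Ring R] [AddCommGroup M] [Module R M]
    {x y : M} (h : y = x ∨ y = -x) : ∃ ε : Rˣ, y = ε • x := by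
  rcases h with rfl | rfl
  · exact ⟨1, (one_smul _ _).symm⟩
  · exact ⟨-1, by simp⟩

lemma symplForm_smul_right {R : Type} [CommRing R] {g : ℕ} (v w : SV g R) (c : R) :
    symplForm g R v (c • w) = c * symplForm g R v w := by
  simp only [symplForm, Pi.smul_apply, smul_eq_mul, Finset.mul_sum]
  exact Finset.sum_congr rfl fun _ _ => by ring

@[simp] lemma symplForm_zero_right {R : Type} [CommRing R] {g : ℕ} (v : SV g R) :
    symplForm g R v 0 = 0 := by
  simp [symplForm]

section Coordinates

variable {n : ℕ}

/- Positions in `ℤ^{2(n+1)}` are 0-based: `idxA n` and `idxB n` hold the coordinates of `e_1`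
and `e_{n+2}`, and `wIndex n` lists the remaining positions in increasing order, i.e. the
coordinates of `W`, in the order used by `embMap`. -/
def idxA (n : ℕ) : Fin (2 * (n + 1)) := ⟨0, by omega⟩

def idxB (n : ℕ) : Fin (2 * (n + 1)) := ⟨n + 1, by omega⟩

def wIndex (n : ℕ) (i : Fin (2 * n)) : Fin (2 * (n + 1)) :=
  if (i : ℕ) < n then ⟨i + 1, by omega⟩ else ⟨i + 2, by omega⟩

lemma val_wIndex (i : Fin (2 * n)) :
    (wIndex n i : ℕ) = if (i : ℕ) < n then (i : ℕ) + 1 else (i : ℕ) + 2 := by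
  unfold wIndex; split_ifs <;> rfl

lemma exists_wIndex_eq (j : Fin (2 * (n + 1))) (hA : j ≠ idxA n) (hB : j ≠ idxB n) :
    ∃ i, wIndex n i = j := by
  simp only [idxA, idxB, ne_eq, Fin.ext_iff] at hA hB
  have := j.isLt
  by_cases h : (j : ℕ) < n + 1
  · refine ⟨⟨j - 1, by omega⟩, ?_⟩
    rw [Fin.ext_iff, val_wIndex]; simp only; split_ifs <;> omega
  · refine ⟨⟨j - 2, by omega⟩, ?_⟩
    rw [Fin.ext_iff, val_wIndex]; simp only; split_ifs <;> omega

lemma SV.ext_split {R : Type} [CommRing R] {v w : SV (n + 1) R} (hA : v (idxA n) = w (idxA n))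
    (hB : v (idxB n) = w (idxB n)) (hW : ∀ i, v (wIndex n i) = w (wIndex n i)) : v = w := by
  funext j
  by_cases hjA : j = idxA n
  · rwa [hjA]
  by_cases hjB : j = idxB n
  · rwa [hjB]
  obtain ⟨i, rfl⟩ := exists_wIndex_eq j hjA hjB
  exact hW i

lemma symplForm_succ {R : Type} [CommRing R] (v w : SV (n + 1) R) :
    symplForm (n + 1) R v w = v (idxA n) * w (idxB n) - v (idxB n) * w (idxA n) +
      symplForm n R (fun i => v (wIndex n i)) (fun i => w (wIndex n i)) := by
  rw [symplForm, symplForm, Fin.sum_univ_succ]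
  congr 1
  refine Finset.sum_congr rfl fun i _ => ?_
  have := i.isLt
  have hlo : wIndex n ⟨i, by omega⟩ = ⟨i + 1, by omega⟩ := by
    ext; rw [val_wIndex, if_pos this]
  have hhi : wIndex n ⟨n + i, by omega⟩ = ⟨n + 1 + (i + 1), by omega⟩ := by
    ext; rw [val_wIndex, if_neg (by simp)]; simp only; omega
  simp only [Fin.val_succ, hlo, hhi]

@[simp] lemma embMap_apply_idxA (v : SV n ℤ) : embMap (n + 1) v (idxA n) = 0 := by
  simp [embMap, idxA]

@[simp] lemma embMap_apply_idxB (v : SV n ℤ) : embMap (n + 1) v (idxB n) = 0 := by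
  simp [embMap, idxB]

@[simp] lemma embMap_apply_wIndex (v : SV n ℤ) (i : Fin (2 * n)) :
    embMap (n + 1) v (wIndex n i) = v i := by
  have := i.isLt
  have hw := val_wIndex i
  simp only [embMap]
  split_ifs at hw ⊢ <;> first | omega | (congr 1; ext; simp only; omega)

@[simp] lemma stdE_apply_idxA (j : ℕ) : stdE (n + 1) j (idxA n) = if j = 0 then 1 else 0 := by
  simp [stdE, idxA, eq_comm]

@[simp] lemma stdE_apply_idxB (j : ℕ) :
    stdE (n + 1) j (idxB n) = if j = n + 1 then 1 else 0 := by
  simp [stdE, idxB, eq_comm]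

@[simp] lemma stdE_zero_apply_wIndex (i : Fin (2 * n)) : stdE (n + 1) 0 (wIndex n i) = 0 := by
  have hw := val_wIndex i
  simp only [stdE]
  split_ifs at hw ⊢ <;> omega

@[simp] lemma stdE_succ_apply_wIndex (i : Fin (2 * n)) :
    stdE (n + 1) (n + 1) (wIndex n i) = 0 := by
  have := i.isLt
  have hw := val_wIndex i
  simp only [stdE]
  split_ifs at hw ⊢ <;> omega

lemma units_smul_stdE_zero_eq_self_iff {ε : ℤˣ} :
    ε • stdE (n + 1) 0 = stdE (n + 1) 0 ↔ ε = 1 := by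
  refine ⟨fun h => Units.ext ?_, fun h => h ▸ one_smul _ _⟩
  simpa [Units.smul_def] using congrFun h (idxA n)

def splitEquiv (n : ℕ) : SV (n + 1) ℤ ≃ₗ[ℤ] (ℤ × ℤ) × SV n ℤ where
  toFun v := ((v (idxA n), v (idxB n)), fun i => v (wIndex n i))
  invFun x := x.1.1 • stdE (n + 1) 0 + x.1.2 • stdE (n + 1) (n + 1) + embMap (n + 1) x.2
  map_add' _ _ := rfl
  map_smul' _ _ := rfl
  left_inv v := SV.ext_split (by simp) (by simp) (by simp)
  right_inv x := by ext <;> simp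

lemma splitEquiv_apply_fst (v : SV (n + 1) ℤ) :
    (splitEquiv n v).1 = (v (idxA n), v (idxB n)) := rfl

lemma splitEquiv_symm_apply (x : (ℤ × ℤ) × SV n ℤ) :
    (splitEquiv n).symm x =
      x.1.1 • stdE (n + 1) 0 + x.1.2 • stdE (n + 1) (n + 1) + embMap (n + 1) x.2 := rfl

lemma splitEquiv_symm_inl (a : ℤ × ℤ) :
    (splitEquiv n).symm (a, 0) = a.1 • stdE (n + 1) 0 + a.2 • stdE (n + 1) (n + 1) := by
  rw [splitEquiv_symm_apply, add_eq_left]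
  exact (splitEquiv n).injective (by ext <;> simp [splitEquiv])

lemma splitEquiv_stdE_zero : splitEquiv n (stdE (n + 1) 0) = ((1, 0), 0) := by
  ext <;> simp [splitEquiv]

lemma splitEquiv_stdE_succ : splitEquiv n (stdE (n + 1) (n + 1)) = ((0, 1), 0) := by
  ext <;> simp [splitEquiv]

lemma splitEquiv_embMap (w : SV n ℤ) : splitEquiv n (embMap (n + 1) w) = ((0, 0), w) := by
  ext <;> simp [splitEquiv]

lemma symplForm_eq_splitEquiv (v w : SV (n + 1) ℤ) :
    symplForm (n + 1) ℤ v w =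
      (splitEquiv n v).1.1 * (splitEquiv n w).1.2 - (splitEquiv n v).1.2 * (splitEquiv n w).1.1 +
        symplForm n ℤ (splitEquiv n v).2 (splitEquiv n w).2 :=
  symplForm_succ v w

lemma symplForm_stdE_zero (v : SV (n + 1) ℤ) :
    symplForm (n + 1) ℤ v (stdE (n + 1) 0) = -v (idxB n) := by
  rw [symplForm_eq_splitEquiv, splitEquiv_stdE_zero]
  simp [splitEquiv]

lemma symplForm_stdE_succ (v : SV (n + 1) ℤ) :
    symplForm (n + 1) ℤ v (stdE (n + 1) (n + 1)) = v (idxA n) := by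
  rw [symplForm_eq_splitEquiv, splitEquiv_stdE_succ]
  simp [splitEquiv]

lemma symplForm_embMap (v w : SV n ℤ) :
    symplForm (n + 1) ℤ (embMap (n + 1) v) (embMap (n + 1) w) = symplForm n ℤ v w := by
  simp [symplForm_eq_splitEquiv, splitEquiv_embMap]

lemma rMap_eq_rMap_iff_splitEquiv {v w : SV (n + 1) ℤ} :
    rMap (n + 1) v = rMap (n + 1) w ↔
      (((splitEquiv n v).1.1 : ZMod 2) = (splitEquiv n w).1.1 ∧
        ((splitEquiv n v).1.2 : ZMod 2) = (splitEquiv n w).1.2) ∧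
      rMap n (splitEquiv n v).2 = rMap n (splitEquiv n w).2 :=
  ⟨fun h => ⟨⟨congrFun h _, congrFun h _⟩, funext fun _ => congrFun h _⟩,
    fun ⟨⟨hA, hB⟩, hW⟩ => SV.ext_split hA hB fun i => congrFun hW i⟩

end Coordinates

section Signs

variable {n : ℕ} {Y : SAut (n + 1) ℤ} {ε : ℤˣ}

lemma apply_idxA_of_mem_Sp (hY : Y ∈ Sp (n + 1) ℤ)
    (hB : Y (stdE (n + 1) (n + 1)) = ε • stdE (n + 1) (n + 1)) (v : SV (n + 1) ℤ) :
    Y v (idxA n) = ε * v (idxA n) := by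
  have h := hY v (stdE (n + 1) (n + 1))
  rw [hB, Units.smul_def, symplForm_smul_right, symplForm_stdE_succ, symplForm_stdE_succ] at h
  rw [← h, ← mul_assoc, Int.units_coe_mul_self, one_mul]

lemma apply_idxB_of_mem_Sp (hY : Y ∈ Sp (n + 1) ℤ)
    (hA : Y (stdE (n + 1) 0) = ε • stdE (n + 1) 0) (v : SV (n + 1) ℤ) :
    Y v (idxB n) = ε * v (idxB n) := by
  have h := hY v (stdE (n + 1) 0)
  rw [hA, Units.smul_def, symplForm_smul_right, symplForm_stdE_zero, symplForm_stdE_zero,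
    mul_neg, neg_inj] at h
  rw [← h, ← mul_assoc, Int.units_coe_mul_self, one_mul]

lemma exists_sign_of_mem_StabG (hY : Y ∈ StabG (n + 1)) :
    ∃ ε : ℤˣ, Y (stdE (n + 1) 0) = ε • stdE (n + 1) 0 ∧
      Y (stdE (n + 1) (n + 1)) = ε • stdE (n + 1) (n + 1) := by
  obtain ⟨⟨hSp, -⟩, hA, hB⟩ := hY
  obtain ⟨ε, hε⟩ := exists_units_smul_eq_of_eq_or_eq_neg (R := ℤ) hA
  obtain ⟨ε', hε'⟩ := exists_units_smul_eq_of_eq_or_eq_neg (R := ℤ) hB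
  refine ⟨ε, hε, ?_⟩
  have h := apply_idxA_of_mem_Sp hSp hε' (stdE (n + 1) 0)
  rw [hε, Units.smul_def] at h
  simp only [Pi.smul_apply, stdE_apply_idxA, if_true, smul_eq_mul, mul_one] at h
  rwa [Units.ext h]

end Signs

section Block

variable {n : ℕ}

def blockEquiv (ε : ℤˣ) (Z : SAut n ℤ) : SAut (n + 1) ℤ :=
  (splitEquiv n).trans
    (((DistribMulAction.toLinearEquiv ℤ (ℤ × ℤ) ε).prodCongr Z).trans (splitEquiv n).symm)

variable {ε : ℤˣ} {Z : SAut n ℤ}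

lemma splitEquiv_blockEquiv (v : SV (n + 1) ℤ) :
    splitEquiv n (blockEquiv ε Z v) = (ε • (splitEquiv n v).1, Z (splitEquiv n v).2) := by
  simp [blockEquiv]

lemma blockEquiv_stdE_zero : blockEquiv ε Z (stdE (n + 1) 0) = ε • stdE (n + 1) 0 :=
  (splitEquiv n).injective <| by
    simp only [splitEquiv_blockEquiv, Units.smul_def, map_smul, splitEquiv_stdE_zero]
    simp

lemma blockEquiv_stdE_succ :
    blockEquiv ε Z (stdE (n + 1) (n + 1)) = ε • stdE (n + 1) (n + 1) :=
  (splitEquiv n).injective <| by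
    simp only [splitEquiv_blockEquiv, Units.smul_def, map_smul, splitEquiv_stdE_succ]
    simp

lemma blockEquiv_embMap (w : SV n ℤ) :
    blockEquiv ε Z (embMap (n + 1) w) = embMap (n + 1) (Z w) :=
  (splitEquiv n).injective <| by simp [splitEquiv_blockEquiv, splitEquiv_embMap]

variable (n) in
def blockHom : ℤˣ × SAut n ℤ →* SAut (n + 1) ℤ where
  toFun p := blockEquiv p.1 p.2
  map_one' := LinearEquiv.ext fun v => (splitEquiv n).injective <| by
    simp [splitEquiv_blockEquiv]
  map_mul' p q := LinearEquiv.ext fun v => (splitEquiv n).injective <| by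
    simp [splitEquiv_blockEquiv, mul_smul]

lemma blockHom_injective : Function.Injective (blockHom n) := by
  rintro ⟨ε, Z⟩ ⟨ε', Z'⟩ h
  have hA := congrArg (splitEquiv n) (LinearEquiv.congr_fun h (stdE (n + 1) 0))
  have hW := fun w => congrArg (splitEquiv n) (LinearEquiv.congr_fun h (embMap (n + 1) w))
  simp only [blockHom, MonoidHom.coe_mk, OneHom.coe_mk, splitEquiv_blockEquiv,
    splitEquiv_stdE_zero, splitEquiv_embMap] at hA hW
  simp only [Prod.smul_mk, Units.smul_def, smul_eq_mul, mul_one, smul_zero, Prod.mk.injEq,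
    and_true, map_zero] at hA
  exact Prod.ext (Units.ext hA) (LinearEquiv.ext fun w => by simpa using hW w)

lemma blockEquiv_mem_Sp_iff : blockEquiv ε Z ∈ Sp (n + 1) ℤ ↔ Z ∈ Sp n ℤ := by
  refine ⟨fun h v w => ?_, fun h v w => ?_⟩
  · rw [← symplForm_embMap, ← blockEquiv_embMap (ε := ε), ← blockEquiv_embMap (ε := ε),
      h, symplForm_embMap]
  · rw [symplForm_eq_splitEquiv, splitEquiv_blockEquiv, splitEquiv_blockEquiv, h,
      symplForm_eq_splitEquiv v w]
    simp only [Prod.smul_fst, Prod.smul_snd, Units.smul_def, smul_eq_mul]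
    linear_combination ((splitEquiv n v).1.1 * (splitEquiv n w).1.2 -
      (splitEquiv n v).1.2 * (splitEquiv n w).1.1) * Int.units_coe_mul_self ε

lemma blockEquiv_mem_SpLevel2_iff : blockEquiv ε Z ∈ SpLevel2 (n + 1) ↔ Z ∈ SpLevel2 n := by
  refine and_congr blockEquiv_mem_Sp_iff ⟨fun h v => ?_, fun h v => ?_⟩
  · have := rMap_eq_rMap_iff_splitEquiv.1 (h (embMap (n + 1) v))
    simpa [splitEquiv_blockEquiv, splitEquiv_embMap] using this.2
  · have hε : ((ε : ℤ) : ZMod 2) = 1 := by rcases Int.units_eq_one_or ε with rfl | rfl <;> rfl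
    refine rMap_eq_rMap_iff_splitEquiv.2 ?_
    simp [splitEquiv_blockEquiv, Units.smul_def, hε, h]

lemma blockEquiv_mem_StabG_iff : blockEquiv ε Z ∈ StabG (n + 1) ↔ Z ∈ SpLevel2 n := by
  rw [← blockEquiv_mem_SpLevel2_iff (ε := ε)]
  refine ⟨And.left, fun h => ⟨h, ?_, ?_⟩⟩ <;>
    rcases Int.units_eq_one_or ε with rfl | rfl <;>
    simp [blockEquiv_stdE_zero, blockEquiv_stdE_succ]

lemma exists_eq_blockEquiv_of_mem_StabG {Y : SAut (n + 1) ℤ} (hY : Y ∈ StabG (n + 1)) :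
    ∃ (ε : ℤˣ) (Z : SAut n ℤ), Y = blockEquiv ε Z := by
  obtain ⟨ε, hA, hB⟩ := exists_sign_of_mem_StabG hY
  have hSp := hY.1.1
  let T := (splitEquiv n).symm.trans (Y.trans (splitEquiv n))
  have hfst : ∀ x, (T x).1 = ε • x.1 := fun x => by
    obtain ⟨v, rfl⟩ := (splitEquiv n).surjective x
    simp only [T, LinearEquiv.trans_apply, LinearEquiv.symm_apply_apply, splitEquiv_apply_fst,
      apply_idxA_of_mem_Sp hSp hB, apply_idxB_of_mem_Sp hSp hA]
    simp [Units.smul_def]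
  have hsnd : ∀ a, (T (a, 0)).2 = 0 := fun a => by
    simp only [T, LinearEquiv.trans_apply, splitEquiv_symm_inl, map_add, map_smul, hA, hB,
      Units.smul_def, splitEquiv_stdE_zero, splitEquiv_stdE_succ]
    simp
  obtain ⟨Z, hZ⟩ := LinearEquiv.exists_eq_prodCongr_of_fst T
    (DistribMulAction.toLinearEquiv ℤ (ℤ × ℤ) ε) hfst hsnd
  refine ⟨ε, Z, LinearEquiv.ext fun v => (splitEquiv n).injective ?_⟩
  simpa [T, splitEquiv_blockEquiv] using LinearEquiv.congr_fun hZ (splitEquiv n v)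

variable (n) in
def blockHomStabG : ℤˣ × SpLevel2 n →* StabG (n + 1) :=
  ((blockHom n).comp ((MonoidHom.id ℤˣ).prodMap (SpLevel2 n).subtype)).codRestrict _
    fun p => blockEquiv_mem_StabG_iff.2 p.2.2

lemma blockHomStabG_bijective : Function.Bijective (blockHomStabG n) := by
  refine ⟨fun p q h => ?_, fun Y => ?_⟩
  · exact Prod.map_injective.2 ⟨Function.injective_id, Subtype.val_injective⟩
      (blockHom_injective (congrArg Subtype.val h))
  · obtain ⟨ε, Z, hY⟩ := exists_eq_blockEquiv_of_mem_StabG Y.2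
    have hZ : Z ∈ SpLevel2 n := blockEquiv_mem_StabG_iff.1 (hY ▸ Y.2)
    exact ⟨(ε, ⟨Z, hZ⟩), Subtype.ext hY.symm⟩

end Block

/-- The stabilizer in `Sp_{2g}(ℤ)[2]` of the lax vectors `⟨e_1⟩` and
`⟨e_{g+1}⟩` splits as `(ℤ/2) × Sp_{2g-2}(ℤ)[2]`: each element acts by a single sign
`ε` on `e_1` and `e_{g+1}` and preserves the complementary summand `W`, and
`Y ↦ (ε, Y|_W)` is a group isomorphism. -/
theorem stabilizer_splitting (g : ℕ) (hg : 1 ≤ g) :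
    (∀ Y : SAut g ℤ, Y ∈ StabG g → ∃ ε : ℤ, (ε = 1 ∨ ε = -1) ∧
      Y (stdE g 0) = ε • stdE g 0 ∧ Y (stdE g g) = ε • stdE g g ∧
      ∀ v : SV (g-1) ℤ, ∃ w : SV (g-1) ℤ, Y (embMap g v) = embMap g w) ∧
    ∃ φ : ↥(StabG g) ≃* Multiplicative (ZMod 2) × ↥(SpLevel2 (g-1)),
      ∀ Y : ↥(StabG g),
        ((φ Y).1 = 1 ↔ (Y : SAut g ℤ) (stdE g 0) = stdE g 0) ∧
        (∀ v : SV (g-1) ℤ,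
          (Y : SAut g ℤ) (embMap g v) = embMap g ((((φ Y).2 : ↥(SpLevel2 (g-1))) : SAut (g-1) ℤ) v)) := by
  obtain ⟨n, rfl⟩ : ∃ n, g = n + 1 := ⟨g - 1, by omega⟩
  refine ⟨fun Y hY => ?_, ?_⟩
  · obtain ⟨ε, Z, rfl⟩ := exists_eq_blockEquiv_of_mem_StabG hY
    exact ⟨ε, Int.isUnit_iff.1 ε.isUnit, blockEquiv_stdE_zero, blockEquiv_stdE_succ,
      fun v => ⟨Z v, blockEquiv_embMap v⟩⟩
  let ψ := MulEquiv.ofBijective (blockHomStabG n) blockHomStabG_bijective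
  let sign : ℤˣ ≃* Multiplicative (ZMod 2) := mulEquivOfPrimeCardEq (p := 2) (by simp) (by simp)
  refine ⟨ψ.symm.trans (sign.prodCongr (MulEquiv.refl _)), fun Y => ?_⟩
  obtain ⟨⟨ε, Z⟩, rfl⟩ := ψ.surjective Y
  simp only [MulEquiv.trans_apply, MulEquiv.symm_apply_apply]
  refine ⟨?_, fun v => blockEquiv_embMap v⟩
  change sign ε = 1 ↔ blockEquiv ε Z.1 (stdE (n + 1) 0) = stdE (n + 1) 0
  rw [sign.map_eq_one_iff, blockEquiv_stdE_zero, units_smul_stdE_zero_eq_self_iff]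
end

section
/- Let n ≥ 5 and let ab : B_n → ℤ be the abelianization homomorphism determined by ab(σ_i) = 1 for all i. Then the image of the kernel of the integral Burau representation β_n under ab contains 4ℤ. -/
/-!
The Burau matrices of `σ_1, …, σ_{m-2}` in `GL_n(ℤ)` are those of `GL_m(ℤ)` extended by an
identity block, so the image of the full twist `T_m` is that of `T_m ∈ B_m`, extended the same
way. A finite computation shows that `T_3 ^ 2` and `T_5 ^ 2` map to the identity in `GL_3(ℤ)`
and `GL_5(ℤ)`. Their exponent sums are `12` and `40`, and `40 - 3 * 12 = 4`.
-/

/-- The braid relations on generators `σ_1, …, σ_{n-1}` (indexed by `Fin (n-1)`). -/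
def braidRels (n : ℕ) : Set (FreeGroup (Fin (n-1))) :=
  {r | (∃ i j : Fin (n-1), (i : ℕ) + 1 = (j : ℕ) ∧
      r = FreeGroup.of i * FreeGroup.of j * FreeGroup.of i *
        (FreeGroup.of j * FreeGroup.of i * FreeGroup.of j)⁻¹) ∨
    (∃ i j : Fin (n-1), (i : ℕ) + 2 ≤ (j : ℕ) ∧
      r = FreeGroup.of i * FreeGroup.of j * (FreeGroup.of j * FreeGroup.of i)⁻¹)}

/-- The braid group `B_n` on `n` strands, as a presented group. -/
abbrev BraidGroup (n : ℕ) : Type := PresentedGroup (braidRels n)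

/-- The standard generator `σ_{i+1}` of the braid group. -/
def braidGen (n : ℕ) (i : Fin (n-1)) : BraidGroup n := PresentedGroup.of i

/-- The generator `σ_{i+1}` of `B_n` for a natural number index `i < n-1`
(and the identity for larger `i`). -/
def braidGen' (n i : ℕ) : BraidGroup n :=
  if h : i < n - 1 then braidGen n ⟨i, h⟩ else 1

/-- The full twist `T_m = (σ_1 σ_2 ⋯ σ_{m-1})^m ∈ B_n` on the first `m` strands;
it is the Dehn twist about a convex curve surrounding the first `m` marked points. -/
def fullTwist (n m : ℕ) : BraidGroup n :=
  (((List.range (m-1)).map (braidGen' n)).prod) ^ m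

/-- The matrix in `GL_n(ℤ)` which is the image of `σ_{i+1}` under the unreduced Burau
representation evaluated at `t = -1`: it agrees with the identity matrix except in rows
and columns `i, i+1`, where it is the block `[[2, -1], [1, 0]]`. -/
def burauMatrix (n : ℕ) (i : Fin (n-1)) : Matrix (Fin n) (Fin n) ℤ := fun k l =>
  if (k : ℕ) = (i : ℕ) ∧ (l : ℕ) = (i : ℕ) then 2
  else if (k : ℕ) = (i : ℕ) ∧ (l : ℕ) = (i : ℕ) + 1 then -1
  else if (k : ℕ) = (i : ℕ) + 1 ∧ (l : ℕ) = (i : ℕ) then 1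
  else if (k : ℕ) = (i : ℕ) + 1 ∧ (l : ℕ) = (i : ℕ) + 1 then 0
  else if k = l then 1 else 0

/-- `β : B_n → GL_n(ℤ)` is the integral Burau representation (the unreduced Burau
representation evaluated at `t = -1`). -/
def IsIntegralBurau (n : ℕ) (β : BraidGroup n →* Matrix.GeneralLinearGroup (Fin n) ℤ) : Prop :=
  ∀ i : Fin (n-1), (β (braidGen n i) : Matrix (Fin n) (Fin n) ℤ) = burauMatrix n i

/-- The squares of Dehn twists about convex curves surrounding odd numbers (at least 3)
of marked points. -/
def oddTwistSquares (n : ℕ) : Set (BraidGroup n) :=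
  {x | ∃ m : ℕ, Odd m ∧ 3 ≤ m ∧ m ≤ n ∧ x = (fullTwist n m) ^ 2}

section BlockEmbedding

variable {R : Type*} [Semiring R] {m n : ℕ}

def upperLeftBlockHom (h : m ≤ n) : Matrix (Fin m) (Fin m) R →* Matrix (Fin n) (Fin n) R :=
  (Matrix.reindexRingEquiv R
      (finSumFinEquiv.trans (finCongr (Nat.add_sub_of_le h)))).toMonoidHom.comp
    { toFun := fun A => Matrix.fromBlocks A 0 0 1
      map_one' := Matrix.fromBlocks_one
      map_mul' := fun A B => by simp [Matrix.fromBlocks_multiply] }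

theorem upperLeftBlockHom_apply (h : m ≤ n) (A : Matrix (Fin m) (Fin m) R) (k l : Fin n) :
    upperLeftBlockHom h A k l =
      if hkl : (k : ℕ) < m ∧ (l : ℕ) < m then A ⟨k, hkl.1⟩ ⟨l, hkl.2⟩
      else (1 : Matrix (Fin n) (Fin n) R) k l := by
  set e := finSumFinEquiv.trans (finCongr (Nat.add_sub_of_le h))
  obtain ⟨x, rfl⟩ := e.surjective k
  obtain ⟨y, rfl⟩ := e.surjective l
  rcases x with a | a <;> rcases y with b | b <;>
    simp [upperLeftBlockHom, e, Matrix.one_apply, Fin.ext_iff] <;> omega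

end BlockEmbedding

theorem burauMatrix_eq_upperLeftBlockHom {m n i : ℕ} (h : m ≤ n) (him : i < m - 1)
    (hin : i < n - 1) :
    burauMatrix n ⟨i, hin⟩ = upperLeftBlockHom h (burauMatrix m ⟨i, him⟩) := by
  ext k l
  rw [upperLeftBlockHom_apply]
  split_ifs with hkl
  · simp only [burauMatrix, Fin.ext_iff]
  · simp only [burauMatrix, Matrix.one_apply]
    split_ifs <;> omega

def burauMatrix' (m i : ℕ) : Matrix (Fin m) (Fin m) ℤ :=
  if h : i < m - 1 then burauMatrix m ⟨i, h⟩ else 1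

def burauFullTwist (m : ℕ) : Matrix (Fin m) (Fin m) ℤ :=
  ((List.range (m - 1)).map (burauMatrix' m)).prod ^ m

theorem burauFullTwist_three_sq : burauFullTwist 3 ^ 2 = 1 := by decide

theorem burauFullTwist_five_sq : burauFullTwist 5 ^ 2 = 1 := by decide

theorem map_fullTwist {M : Type*} [Monoid M] {n m : ℕ} (f : BraidGroup n →* M) (g : ℕ → M)
    (hfg : ∀ i < m - 1, f (braidGen' n i) = g i) :
    f (fullTwist n m) = ((List.range (m - 1)).map g).prod ^ m := by
  rw [fullTwist, map_pow, map_list_prod, List.map_map]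
  congr 2
  exact List.map_congr_left fun i hi => hfg i (List.mem_range.mp hi)

theorem map_fullTwist_of_forall_eq {M : Type*} [Monoid M] {n m : ℕ} (hm : m ≤ n)
    (f : BraidGroup n →* M) (g : M) (hfg : ∀ i, f (braidGen n i) = g) :
    f (fullTwist n m) = g ^ ((m - 1) * m) := by
  rw [map_fullTwist f (fun _ => g), List.map_const', List.prod_replicate, List.length_range,
    pow_mul]
  intro i hi
  rw [braidGen', dif_pos (by omega), hfg]

theorem val_map_fullTwist {n m : ℕ} (hm : m ≤ n)
    {β : BraidGroup n →* Matrix.GeneralLinearGroup (Fin n) ℤ} (hβ : IsIntegralBurau n β) :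
    (β (fullTwist n m) : Matrix (Fin n) (Fin n) ℤ) =
      upperLeftBlockHom hm (burauFullTwist m) := by
  rw [← Units.coeHom_apply, ← MonoidHom.comp_apply,
    map_fullTwist _ (upperLeftBlockHom hm ∘ burauMatrix' m), burauFullTwist, map_pow,
    map_list_prod, List.map_map]
  intro i hi
  rw [MonoidHom.comp_apply, Units.coeHom_apply, braidGen', dif_pos (by omega), hβ,
    Function.comp_apply, burauMatrix', dif_pos hi, burauMatrix_eq_upperLeftBlockHom hm]

theorem fullTwist_sq_mem_ker {n m : ℕ} (hm : m ≤ n)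
    {β : BraidGroup n →* Matrix.GeneralLinearGroup (Fin n) ℤ} (hβ : IsIntegralBurau n β)
    (hm_sq : burauFullTwist m ^ 2 = 1) :
    fullTwist n m ^ 2 ∈ β.ker := by
  rw [MonoidHom.mem_ker, map_pow, Units.ext_iff, Units.val_pow_eq_pow_val,
    val_map_fullTwist hm hβ, ← map_pow, hm_sq, map_one, Units.val_one]

/-- For `n ≥ 5`, the image under the abelianization map `B_n → ℤ`
(sending each `σ_i` to `1`) of the kernel of the integral Burau representation
contains `4ℤ`. -/
theorem abelianization_of_ker_integralBurau_contains_four (n : ℕ) (hn : 5 ≤ n)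
    (β : BraidGroup n →* Matrix.GeneralLinearGroup (Fin n) ℤ) (hβ : IsIntegralBurau n β)
    (ab : BraidGroup n →* Multiplicative ℤ)
    (hab : ∀ i : Fin (n-1), ab (braidGen n i) = Multiplicative.ofAdd 1) :
    ∀ m : ℤ, (4 : ℤ) ∣ m → ∃ x ∈ β.ker, ab x = Multiplicative.ofAdd m := by
  intro m ⟨k, hk⟩
  have ker3 := fullTwist_sq_mem_ker (by omega) hβ burauFullTwist_three_sq
  have ker5 := fullTwist_sq_mem_ker (by omega) hβ burauFullTwist_five_sq
  refine ⟨(fullTwist n 5 ^ 2) ^ k * ((fullTwist n 3 ^ 2) ^ (3 * k))⁻¹,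
    mul_mem (zpow_mem ker5 k) (inv_mem (zpow_mem ker3 _)), ?_⟩
  rw [map_mul, map_inv, map_zpow, map_zpow, map_pow, map_pow,
    map_fullTwist_of_forall_eq (by omega) ab _ hab, map_fullTwist_of_forall_eq (by omega) ab _ hab,
    hk]
  apply Multiplicative.toAdd.injective
  simp only [toAdd_mul, toAdd_inv, toAdd_zpow, toAdd_pow, toAdd_ofAdd, nsmul_eq_mul, smul_eq_mul]
  push_cast
  ring
end
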